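/- arXiv:1803.01623 — 10 statements merged into one kernel-verified Lean document; each statement's English description precedes it below -/
import Mathlib

section
/- Let ℓ ≥ 2 and let ξ_1, …, ξ_ℓ be pairwise distinct complex variables (elements of a polynomial ring). Then the polynomial Σ_{p=1}^{ℓ} (−1)^{p−1} ξ_p^{ℓ} Π_{1 ≤ α < β ≤ ℓ, α,β ≠ p} (ξ_α − ξ_β) is divisible by (ξ_γ − ξ_δ) for every pair γ < δ. -/
/-!
Up to a global sign, the sum is the Laplace expansion along the first column of the determinant
of the matrix with rows `(ξ_i ^ ℓ, 1, ξ_i, …, ξ_i ^ (ℓ - 2))`: the minors are Vandermonde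
determinants. Modulo `ξ_γ - ξ_δ` two rows of that matrix agree, so the sum vanishes there.
-/

open MvPolynomial Finset

theorem Fin.prod_filter_lt_eq_prod_Ioi {M : Type*} [CommMonoid M] {n : ℕ}
    (f : Fin n → Fin n → M) :
    ∏ q ∈ univ.filter (fun q : Fin n × Fin n => q.1 < q.2), f q.1 q.2
      = ∏ i, ∏ j ∈ Ioi i, f i j := by
  rw [prod_filter, ← univ_product_univ, prod_product]
  refine prod_congr rfl fun i _ => ?_
  rw [← prod_filter]
  congr 1
  ext j
  simp

theorem Fin.prod_filter_lt_ne_eq_prod_succAbove {M : Type*} [CommMonoid M] {m : ℕ}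
    (p : Fin (m + 1)) (f : Fin (m + 1) → Fin (m + 1) → M) :
    ∏ q ∈ univ.filter
        (fun q : Fin (m + 1) × Fin (m + 1) => q.1 < q.2 ∧ q.1 ≠ p ∧ q.2 ≠ p), f q.1 q.2
      = ∏ q ∈ univ.filter (fun q : Fin m × Fin m => q.1 < q.2),
          f (p.succAbove q.1) (p.succAbove q.2) := by
  symm
  refine prod_nbij (fun q => (p.succAbove q.1, p.succAbove q.2)) ?_ ?_ ?_ (fun _ _ => rfl)
  · intro q hq
    simp only [mem_filter, mem_univ, true_and] at hq ⊢
    exact ⟨Fin.strictMono_succAbove p hq, Fin.succAbove_ne p _, Fin.succAbove_ne p _⟩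
  · intro a _ b _ hab
    simp only [Prod.mk.injEq, Fin.succAbove_right_inj] at hab
    exact Prod.ext hab.1 hab.2
  · rintro ⟨i, j⟩ hq
    obtain ⟨hij, hi, hj⟩ : i < j ∧ i ≠ p ∧ j ≠ p := by simpa using hq
    obtain ⟨a, rfl⟩ := Fin.exists_succAbove_eq hi
    obtain ⟨b, rfl⟩ := Fin.exists_succAbove_eq hj
    exact ⟨(a, b), by simpa [Fin.succAbove_lt_succAbove_iff] using hij, rfl⟩

variable {R : Type*} [CommRing R]

theorem prod_filter_lt_sub_eq_neg_one_pow_mul_det_vandermonde {m : ℕ} (v : Fin m → R) :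
    ∏ q ∈ univ.filter (fun q : Fin m × Fin m => q.1 < q.2), (v q.1 - v q.2)
      = (-1) ^ #(univ.filter (fun q : Fin m × Fin m => q.1 < q.2))
          * (Matrix.vandermonde v).det := by
  rw [Matrix.det_vandermonde, ← Fin.prod_filter_lt_eq_prod_Ioi (fun i j => v j - v i),
    ← prod_const, ← prod_mul_distrib]
  exact prod_congr rfl fun _ _ => by ring

def borderedVandermonde {m : ℕ} (k : ℕ) (v : Fin (m + 1) → R) :
    Matrix (Fin (m + 1)) (Fin (m + 1)) R :=
  Matrix.of fun i => Fin.cons (v i ^ k) fun j => v i ^ (j : ℕ)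

theorem det_borderedVandermonde {m : ℕ} (k : ℕ) (v : Fin (m + 1) → R) :
    (borderedVandermonde k v).det
      = ∑ p : Fin (m + 1),
          (-1) ^ (p : ℕ) * v p ^ k * (Matrix.vandermonde fun i => v (p.succAbove i)).det := by
  rw [Matrix.det_succ_column_zero]
  rfl

theorem alternating_sum_eq_neg_one_pow_mul_det_borderedVandermonde {m : ℕ} (k : ℕ)
    (v : Fin (m + 1) → R) :
    ∑ p : Fin (m + 1), (-1) ^ (p : ℕ) * v p ^ k *
        ∏ q ∈ univ.filter
            (fun q : Fin (m + 1) × Fin (m + 1) => q.1 < q.2 ∧ q.1 ≠ p ∧ q.2 ≠ p),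
          (v q.1 - v q.2)
      = (-1) ^ #(univ.filter (fun q : Fin m × Fin m => q.1 < q.2))
          * (borderedVandermonde k v).det := by
  rw [det_borderedVandermonde, mul_sum]
  refine sum_congr rfl fun p _ => ?_
  rw [Fin.prod_filter_lt_ne_eq_prod_succAbove p (fun i j => v i - v j),
    prod_filter_lt_sub_eq_neg_one_pow_mul_det_vandermonde fun i => v (p.succAbove i)]
  ring

theorem det_borderedVandermonde_eq_zero {m : ℕ} (k : ℕ) {v : Fin (m + 1) → R}
    {i j : Fin (m + 1)} (hij : i ≠ j) (hv : v i = v j) : (borderedVandermonde k v).det = 0 :=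
  Matrix.det_zero_of_row_eq hij (funext fun l => by simp [borderedVandermonde, hv])

theorem stmt1_general (ℓ : ℕ) (γ δ : Fin ℓ) (hγδ : γ < δ) :
    (X γ - X δ : MvPolynomial (Fin ℓ) ℂ) ∣
      ∑ p : Fin ℓ, (-1 : MvPolynomial (Fin ℓ) ℂ) ^ (p : ℕ) * X p ^ ℓ *
        ∏ q ∈ Finset.univ.filter
            (fun q : Fin ℓ × Fin ℓ => q.1 < q.2 ∧ q.1 ≠ p ∧ q.2 ≠ p),
          (X q.1 - X q.2) := by
  obtain ⟨m, rfl⟩ := Nat.exists_eq_add_one_of_ne_zero (Fin.pos γ).ne'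
  set π := Ideal.Quotient.mk (Ideal.span {(X γ - X δ : MvPolynomial (Fin (m + 1)) ℂ)})
  have hπ : π (X γ) = π (X δ) :=
    Ideal.Quotient.eq.mpr (Ideal.mem_span_singleton_self _)
  rw [← Ideal.mem_span_singleton, ← Ideal.Quotient.eq_zero_iff_mem]
  simp only [map_sum, map_mul, map_pow, map_neg, map_one, map_prod, map_sub]
  rw [alternating_sum_eq_neg_one_pow_mul_det_borderedVandermonde (m + 1) (fun i => π (X i)),
    det_borderedVandermonde_eq_zero _ hγδ.ne hπ, mul_zero]

theorem stmt1 (ℓ : ℕ) (hℓ : 2 ≤ ℓ) (γ δ : Fin ℓ) (hγδ : γ < δ) :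
    (X γ - X δ : MvPolynomial (Fin ℓ) ℂ) ∣
      ∑ p : Fin ℓ, (-1 : MvPolynomial (Fin ℓ) ℂ) ^ (p : ℕ) * X p ^ ℓ *
        ∏ q ∈ Finset.univ.filter
            (fun q : Fin ℓ × Fin ℓ => q.1 < q.2 ∧ q.1 ≠ p ∧ q.2 ≠ p),
          (X q.1 - X q.2) :=
  stmt1_general ℓ γ δ hγδ
end

section
/- Any binary cubic form f ∈ ℂ[x,y] that factors as a product of three pairwise non-proportional linear forms can be written as f = ℓ₁³ + ℓ₂³ for some linear forms ℓ₁, ℓ₂ ∈ ℂ[x,y]. -/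
/-!
Since the space of linear forms in two variables is 2-dimensional, the non-proportional forms
`l₂, l₃` form a basis, and `l₁ = p l₂ + q l₃` with `p, q ≠ 0` by non-proportionality. So it suffices
to write `(p u + q v) u v` as a sum of two cubes of linear forms in `u, v`, which is done with a
primitive sixth root of unity `t` and a suitable cube root `α`.
-/

open MvPolynomial Module

theorem LinearIndependent.pair_of_not_exists_smul {K V : Type*} [Field K] [AddCommGroup V]
    [Module K V] {x y : V} (hxy : ¬∃ c : K, x = c • y) (hyx : ¬∃ c : K, y = c • x) :
    LinearIndependent K ![x, y] := by
  have hx : x ≠ 0 := fun hx => hxy ⟨0, by rw [hx, zero_smul]⟩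
  exact (LinearIndependent.pair_iff' hx).2 fun c hc => hyx ⟨c, hc.symm⟩

theorem Submodule.mem_span_pair_of_finrank_le_two {K V : Type*} [Field K] [AddCommGroup V]
    [Module K V] {W : Submodule K V} [FiniteDimensional K W] (hW : finrank K W ≤ 2)
    {x y z : V} (hx : x ∈ W) (hy : y ∈ W) (hz : z ∈ W) (hxy : LinearIndependent K ![x, y]) :
    z ∈ span K {x, y} := by
  have hle : span K {x, y} ≤ W := span_le.2 (Set.insert_subset hx (Set.singleton_subset_iff.2 hy))
  have hrank : finrank K (span K {x, y}) = 2 := by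
    rw [← Matrix.range_cons_cons_empty x y ![], finrank_span_eq_card hxy, Fintype.card_fin]
  rwa [eq_of_le_of_finrank_le hle (hW.trans hrank.ge)]

theorem MvPolynomial.finrank_homogeneousSubmodule_one_le (σ K : Type*) [Fintype σ] [Field K] :
    finrank K (homogeneousSubmodule σ K 1) ≤ Fintype.card σ := by
  rw [homogeneousSubmodule_one_eq_span_X]
  exact finrank_range_le_card X

instance MvPolynomial.finiteDimensional_homogeneousSubmodule (σ K : Type*) [Finite σ] [Field K]
    (n : ℕ) : FiniteDimensional K (homogeneousSubmodule σ K n) :=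
  Module.Finite.iff_fg.2 (homogeneousSubmodule_fg σ K n)

/-- Since `t³ = -1`, the pure cubes `u³, v³` cancel, and the cube of the sum leaves
`3α³t(1+t)pq · uv(pu + qv)`. -/
theorem add_pow_three_smul_eq_mul_mul {K R : Type*} [CommRing K] [CommRing R] [Algebra K R]
    {t α p q : K} (ht : t ^ 2 - t + 1 = 0) (hα : 3 * α ^ 3 * t * (1 + t) * p * q = 1) (u v : R) :
    ((α * p) • u + (α * t * q) • v) ^ 3 + ((α * t * p) • u + (α * q) • v) ^ 3 =
      (p • u + q • v) * u * v := by
  have ht' := congrArg (algebraMap K R) ht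
  have hα' := congrArg (algebraMap K R) hα
  simp only [map_add, map_sub, map_mul, map_pow, map_one, map_zero, map_ofNat] at ht' hα'
  simp only [Algebra.smul_def, map_mul]
  linear_combination (algebraMap K R α) ^ 3 * (1 + algebraMap K R t) *
      ((algebraMap K R p) ^ 3 * u ^ 3 + (algebraMap K R q) ^ 3 * v ^ 3) * ht' +
    (algebraMap K R p * u + algebraMap K R q * v) * u * v * hα'

theorem exists_add_pow_three_add_pow_three_eq {K R : Type*} [Field K] [IsAlgClosed K]
    [CommRing R] [Algebra K R] (h3 : (3 : K) ≠ 0) {p q : K} (hp : p ≠ 0) (hq : q ≠ 0) :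
    ∃ a b c d : K, ∀ u v : R,
      (a • u + b • v) ^ 3 + (c • u + d • v) ^ 3 = (p • u + q • v) * u * v := by
  obtain ⟨t, ht⟩ : ∃ t : K, t ^ 2 - t + 1 = 0 := by
    obtain ⟨t, ht⟩ :=
      IsAlgClosed.exists_root (Polynomial.C (1 : K) * .X ^ 2 + .C (-1) * .X + .C 1)
      (by rw [Polynomial.degree_quadratic one_ne_zero]; exact two_ne_zero)
    exact ⟨t, by simpa [sub_eq_add_neg] using ht⟩
  have ht0 : t ≠ 0 := by rintro rfl; norm_num at ht
  have ht1 : 1 + t ≠ 0 := fun h => h3 (by linear_combination ht - (t - 2) * h)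
  obtain ⟨α, hα⟩ := IsAlgClosed.exists_pow_nat_eq (3 * t * (1 + t) * p * q)⁻¹ three_pos
  refine ⟨α * p, α * t * q, α * t * p, α * q, add_pow_three_smul_eq_mul_mul ht ?_⟩
  rw [mul_assoc 3, hα]
  field_simp

theorem stmt3 (l₁ l₂ l₃ : MvPolynomial (Fin 2) ℂ)
    (h₁ : l₁.IsHomogeneous 1) (h₂ : l₂.IsHomogeneous 1) (h₃ : l₃.IsHomogeneous 1)
    (h₁₂ : (¬∃ c : ℂ, l₁ = c • l₂) ∧ (¬∃ c : ℂ, l₂ = c • l₁))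
    (h₁₃ : (¬∃ c : ℂ, l₁ = c • l₃) ∧ (¬∃ c : ℂ, l₃ = c • l₁))
    (h₂₃ : (¬∃ c : ℂ, l₂ = c • l₃) ∧ (¬∃ c : ℂ, l₃ = c • l₂)) :
    ∃ m₁ m₂ : MvPolynomial (Fin 2) ℂ,
      m₁.IsHomogeneous 1 ∧ m₂.IsHomogeneous 1 ∧ l₁ * l₂ * l₃ = m₁ ^ 3 + m₂ ^ 3 := by
  simp only [← mem_homogeneousSubmodule] at h₁ h₂ h₃ ⊢
  obtain ⟨p, q, rfl⟩ := Submodule.mem_span_pair.1 <|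
    Submodule.mem_span_pair_of_finrank_le_two (finrank_homogeneousSubmodule_one_le (Fin 2) ℂ)
      h₂ h₃ h₁ (.pair_of_not_exists_smul h₂₃.1 h₂₃.2)
  have hp : p ≠ 0 := by rintro rfl; exact h₁₃.1 ⟨q, by rw [zero_smul, zero_add]⟩
  have hq : q ≠ 0 := by rintro rfl; exact h₁₂.1 ⟨p, by rw [zero_smul, add_zero]⟩
  obtain ⟨a, b, c, d, hcubes⟩ :=
    exists_add_pow_three_add_pow_three_eq (R := MvPolynomial (Fin 2) ℂ) three_ne_zero hp hq
  have hmem : ∀ x y : ℂ, x • l₂ + y • l₃ ∈ homogeneousSubmodule (Fin 2) ℂ 1 := fun x y =>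
    add_mem (Submodule.smul_mem _ x h₂) (Submodule.smul_mem _ y h₃)
  exact ⟨_, _, hmem a b, hmem c d, (hcubes l₂ l₃).symm⟩
end

section
/- For d ≥ 2, the binary form x^{d−1}y ∈ ℂ[x,y] cannot be written as a sum of fewer than d d-th powers of linear forms, and it can be written as a sum of exactly d such powers. Hence its symmetric (Waring) rank equals d. -/
open MvPolynomial

lemma indep (n : ℕ) (T : Finset ℂ) (hT : T.card ≤ n + 1) (μ : ℂ → ℂ)
    (h : ∑ c ∈ T, Polynomial.C (μ c) * (Polynomial.X + Polynomial.C c) ^ n = 0) : ∀ c ∈ T, μ c = 0 := by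
  induction n generalizing T μ with
  | zero =>
    intro c hc
    have hT' : T = {c} := Finset.eq_singleton_iff_unique_mem.2
      ⟨hc, fun b hb => Finset.card_le_one.1 hT b hb c hc⟩
    rw [hT', Finset.sum_singleton, pow_zero, mul_one] at h
    exact Polynomial.C_eq_zero.mp h
  | succ n ih =>
    intro c₀ hc₀
    have key : ∑ c ∈ T.erase c₀, Polynomial.C (((n:ℂ)+1) * (c₀ - c) * μ c) * (Polynomial.X + Polynomial.C c) ^ n = 0 := by
      have h2 : ∑ c ∈ T, Polynomial.C (((n:ℂ)+1) * (c₀ - c) * μ c) * (Polynomial.X + Polynomial.C c) ^ n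
          = (Polynomial.X + Polynomial.C c₀) * Polynomial.derivative (∑ c ∈ T, Polynomial.C (μ c) * (Polynomial.X + Polynomial.C c) ^ (n+1))
            - Polynomial.C ((n:ℂ)+1) * (∑ c ∈ T, Polynomial.C (μ c) * (Polynomial.X + Polynomial.C c) ^ (n+1)) := by
        rw [Polynomial.derivative_sum, Finset.mul_sum, Finset.mul_sum, ← Finset.sum_sub_distrib]
        refine Finset.sum_congr rfl fun c _ => ?_
        rw [Polynomial.derivative_mul, Polynomial.derivative_C, Polynomial.derivative_pow, Polynomial.derivative_add, Polynomial.derivative_X,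
          Polynomial.derivative_C, add_zero, pow_succ]
        simp only [Nat.add_sub_cancel, map_mul, map_sub, map_add, map_one, map_natCast]
        push_cast
        ring
      rw [h, Polynomial.derivative_zero, mul_zero, mul_zero, sub_zero] at h2
      rw [← Finset.add_sum_erase _ _ hc₀] at h2
      simpa using h2
    have hμ : ∀ c ∈ T.erase c₀, μ c = 0 := by
      intro c hc
      have := ih (T.erase c₀) (by
        have := Finset.card_erase_of_mem hc₀
        omega) _ key c hc
      have hc' : c ≠ c₀ := (Finset.mem_erase.1 hc).1
      have h1 : ((n:ℂ)+1) ≠ 0 := Nat.cast_add_one_ne_zero n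
      have h2 : c₀ - c ≠ 0 := sub_ne_zero.2 (Ne.symm hc')
      rcases mul_eq_zero.1 this with h' | h'
      · exact absurd (mul_eq_zero.1 h') (by tauto)
      · exact h'
    have h3 : Polynomial.C (μ c₀) * (Polynomial.X + Polynomial.C c₀) ^ (n+1) = 0 := by
      rw [← Finset.add_sum_erase _ _ hc₀] at h
      have : ∑ c ∈ T.erase c₀, Polynomial.C (μ c) * (Polynomial.X + Polynomial.C c) ^ (n+1) = 0 :=
        Finset.sum_eq_zero fun c hc => by rw [hμ c hc]; simp
      rw [this, add_zero] at h
      exact h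
    have h4 : (Polynomial.X + Polynomial.C c₀) ^ (n+1) ≠ 0 := pow_ne_zero _ (Polynomial.X_add_C_ne_zero _)
    have := mul_eq_zero.1 h3
    rcases this with h | h
    · exact Polynomial.C_eq_zero.mp h
    · exact absurd h h4


lemma hom1 (p : MvPolynomial (Fin 2) ℂ) (hp : p.IsHomogeneous 1) :
    p = C (coeff (Finsupp.single 0 1) p) * X 0 + C (coeff (Finsupp.single 1 1) p) * X 1 := by
  apply MvPolynomial.ext
  intro m
  rw [coeff_add, coeff_C_mul, coeff_C_mul, coeff_X', coeff_X']
  by_cases h0 : m = Finsupp.single 0 1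
  · subst h0
    have : ¬ (Finsupp.single 1 1 = Finsupp.single (0 : Fin 2) 1) := by
      intro hcon
      have := DFunLike.congr_fun hcon (1 : Fin 2)
      simp at this
    simp [this]
  by_cases h1 : m = Finsupp.single 1 1
  · subst h1
    have : ¬ (Finsupp.single 0 1 = Finsupp.single (1 : Fin 2) 1) := by
      intro hcon
      have := DFunLike.congr_fun hcon (0 : Fin 2)
      simp at this
    simp [this]
  · have hdeg : m.degree ≠ 1 := by
      intro hdeg
      have hsum : m 0 + m 1 = 1 := by
        have h2 : m.degree = ∑ i : Fin 2, m i := by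
          rw [Finsupp.degree]
          exact Finset.sum_subset (Finset.subset_univ _)
            (fun x _ hx => Finsupp.notMem_support_iff.1 hx)
        rw [h2, Fin.sum_univ_two] at hdeg
        exact hdeg
      rcases Nat.add_eq_one_iff.1 hsum with ⟨ha, hb⟩ | ⟨ha, hb⟩
      · apply h1; ext j; fin_cases j <;> simp [ha, hb, Finsupp.single_apply]
      · apply h0; ext j; fin_cases j <;> simp [ha, hb, Finsupp.single_apply]
    rw [hp.coeff_eq_zero hdeg]
    have e0 : ¬ (Finsupp.single (0:Fin 2) 1 = m) := fun h => h0 h.symm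
    have e1 : ¬ (Finsupp.single (1:Fin 2) 1 = m) := fun h => h1 h.symm
    simp [e0, e1]

lemma lower (d : ℕ) (hd : 2 ≤ d) (r : ℕ) (ℓ : Fin r → MvPolynomial (Fin 2) ℂ)
    (hhom : ∀ i, (ℓ i).IsHomogeneous 1)
    (heq : (X 0 ^ (d-1) * X 1 : MvPolynomial (Fin 2) ℂ) = ∑ i, ℓ i ^ d) : d ≤ r := by
  by_contra hlt
  push_neg at hlt
  obtain ⟨m, rfl⟩ : ∃ m, d = m + 2 := ⟨d - 2, by omega⟩
  set a : Fin r → ℂ := fun i => coeff (Finsupp.single 0 1) (ℓ i) with ha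
  set b : Fin r → ℂ := fun i => coeff (Finsupp.single 1 1) (ℓ i) with hb
  set φ : MvPolynomial (Fin 2) ℂ →ₐ[ℂ] Polynomial ℂ :=
    aeval ![1, (Polynomial.X : Polynomial ℂ)] with hφ
  have hℓ : ∀ i, φ (ℓ i) = Polynomial.C (a i) + Polynomial.C (b i) * Polynomial.X := by
    intro i
    conv_lhs => rw [hom1 _ (hhom i)]
    simp [hφ, algebraMap_eq, ha, hb]
  have huniv : (Polynomial.X : Polynomial ℂ)
      = ∑ i, (Polynomial.C (a i) + Polynomial.C (b i) * Polynomial.X) ^ (m+2) := by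
    have h0 := congrArg φ heq
    simp only [map_mul, map_pow, map_sum, hℓ] at h0
    simpa [hφ] using h0
  set s₁ : Finset (Fin r) := Finset.univ.filter (fun i => ¬ b i = 0) with hs₁
  set c : Fin r → ℂ := fun i => a i / b i with hc
  set T : Finset ℂ := s₁.image c with hT
  set μ : ℂ → ℂ := fun t => ∑ i ∈ s₁.filter (fun i => c i = t), (b i) ^ (m+2) with hμ
  set K : ℂ := ∑ i ∈ Finset.univ.filter (fun i => b i = 0), (a i) ^ (m+2) with hK
  have hsum : ∑ i, (Polynomial.C (a i) + Polynomial.C (b i) * Polynomial.X) ^ (m+2)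
      = Polynomial.C K + ∑ t ∈ T, Polynomial.C (μ t)
          * (Polynomial.X + Polynomial.C t) ^ (m+2) := by
    rw [← Finset.sum_filter_add_sum_filter_not Finset.univ (fun i => b i = 0)]
    congr 1
    · rw [hK, map_sum]
      apply Finset.sum_congr rfl
      intro i hi
      have hbi : b i = 0 := by simpa using (Finset.mem_filter.1 hi).2
      rw [hbi, Polynomial.C_pow]
      simp
    · rw [← Finset.sum_fiberwise_of_maps_to (g := c) (t := T)
        (fun i hi => Finset.mem_image_of_mem c hi)]
      apply Finset.sum_congr rfl
      intro t ht
      rw [hμ, map_sum, Finset.sum_mul]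
      apply Finset.sum_congr rfl
      intro i hi
      have hci : c i = t := (Finset.mem_filter.1 hi).2
      have hbi : b i ≠ 0 := by
        have h1 := (Finset.mem_filter.1 hi).1
        simpa [hs₁] using (Finset.mem_filter.1 h1).2
      have hfact : Polynomial.C (a i) + Polynomial.C (b i) * Polynomial.X
          = Polynomial.C (b i) * (Polynomial.X + Polynomial.C t) := by
        rw [← hci, hc]
        simp only [mul_add, ← Polynomial.C_mul]
        rw [mul_div_cancel₀ _ hbi]
        ring
      rw [hfact, mul_pow, ← Polynomial.C_pow]
  have hsplit := huniv.trans hsum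
  have hder : ∑ t ∈ T, Polynomial.C ((((m:ℂ)+2) * ((m:ℂ)+1)) * μ t)
      * (Polynomial.X + Polynomial.C t) ^ m = 0 := by
    have hD2 := congrArg Polynomial.derivative (congrArg Polynomial.derivative hsplit)
    simp only [Polynomial.derivative_X, Polynomial.derivative_one, Polynomial.derivative_add,
      Polynomial.derivative_C, Polynomial.derivative_sum, Polynomial.derivative_mul,
      Polynomial.derivative_pow, Polynomial.derivative_natCast, Nat.add_sub_cancel,
      zero_add, add_zero, mul_one, zero_mul, mul_zero] at hD2
    simp only [show m+2-1 = m+1 from rfl, show m+1-1 = m from rfl] at hD2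
    rw [show ∑ t ∈ T, Polynomial.C ((((m:ℂ)+2) * ((m:ℂ)+1)) * μ t)
        * (Polynomial.X + Polynomial.C t) ^ m
      = ∑ x ∈ T, Polynomial.C (μ x) * (Polynomial.C ((m:ℂ) + 2)
        * (Polynomial.C ((m:ℂ) + 1) * (Polynomial.X + Polynomial.C x) ^ m))
      from Finset.sum_congr rfl fun t ht => by push_cast [map_mul, map_add, map_one]; ring]
    push_cast at hD2
    exact hD2.symm
  have hTcard : T.card ≤ m + 1 := by
    calc T.card ≤ s₁.card := Finset.card_image_le
    _ ≤ Finset.univ.card := Finset.card_filter_le _ _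
    _ ≤ m + 1 := by simpa using by omega
  have hμ0 : ∀ t ∈ T, μ t = 0 := by
    intro t ht
    have h5 := indep m T hTcard _ hder t ht
    have h1 : ((m:ℂ)+2) ≠ 0 := by
      intro hcon
      have : ((m:ℝ)+2) = 0 := by exact_mod_cast congrArg Complex.re hcon
      nlinarith [Nat.cast_nonneg (α := ℝ) m]
    have h2 : ((m:ℂ)+1) ≠ 0 := Nat.cast_add_one_ne_zero m
    rcases mul_eq_zero.1 h5 with h' | h'
    · exact absurd (mul_eq_zero.1 h') (by tauto)
    · exact h'
  have hXC : (Polynomial.X : Polynomial ℂ) = Polynomial.C K := by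
    rw [hsplit, Finset.sum_eq_zero fun t ht => by rw [hμ0 t ht]; simp, add_zero]
  have hfin := congrArg (Polynomial.coeff · 1) hXC
  simp at hfin

lemma mem_part (d : ℕ) (hd : 2 ≤ d) :
    ∃ ℓ : Fin d → MvPolynomial (Fin 2) ℂ,
      (∀ i, (ℓ i).IsHomogeneous 1) ∧
      (X 0 ^ (d - 1) * X 1 : MvPolynomial (Fin 2) ℂ) = ∑ i, ℓ i ^ d := by
  set ζ : ℂ := Complex.exp (2 * Real.pi * Complex.I / d) with hζdef
  have hζ : IsPrimitiveRoot ζ d := Complex.isPrimitiveRoot_exp d (by omega)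
  have hζd : ζ ^ d = 1 := hζ.pow_eq_one
  have hS : ∀ j ∈ Finset.range (d+1),
      (∑ k ∈ Finset.range d, (ζ ^ (2*d - 1 - j)) ^ k) = if j = d - 1 then (d:ℂ) else 0 := by
    intro j hj
    rw [Finset.mem_range] at hj
    by_cases hjd : j = d - 1
    · have he : 2*d - 1 - j = d := by omega
      rw [he, hζd, if_pos hjd]
      simp
    · rw [if_neg hjd]
      have hne : ζ ^ (2*d - 1 - j) ≠ 1 := by
        intro h1
        rw [hζ.pow_eq_one_iff_dvd] at h1
        obtain ⟨q, hq⟩ := h1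
        rcases Nat.lt_or_ge q 2 with hq2 | hq2
        · interval_cases q <;> omega
        · have : 2*d ≤ d*q := by nlinarith
          omega
      rw [geom_sum_eq hne]
      rw [← pow_mul, mul_comm, pow_mul, hζd, one_pow, sub_self, zero_div]
  have key : ∑ k ∈ Finset.range d,
        (C (ζ ^ (k*(d-1))) : MvPolynomial (Fin 2) ℂ) * (X 0 + C (ζ ^ k) * X 1) ^ d
      = C ((d:ℂ)^2) * (X 0 ^ (d-1) * X 1) := by
    have expand : ∀ k, (C (ζ ^ (k*(d-1))) : MvPolynomial (Fin 2) ℂ) * (X 0 + C (ζ ^ k) * X 1) ^ d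
        = ∑ j ∈ Finset.range (d+1), C ((ζ ^ (2*d-1-j)) ^ k)
            * (X 0 ^ j * X 1 ^ (d-j)) * (d.choose j : MvPolynomial (Fin 2) ℂ) := by
      intro k
      rw [add_pow, Finset.mul_sum]
      refine Finset.sum_congr rfl fun j hj => ?_
      rw [Finset.mem_range] at hj
      have hexp : ζ ^ (k*(d-1)) * (ζ ^ k) ^ (d - j) = (ζ ^ (2*d-1-j)) ^ k := by
        rw [← pow_mul, ← pow_add, ← pow_mul]
        congr 1
        have h1 : (d-1) + (d-j) = 2*d-1-j := by omega
        rw [← Nat.mul_add, h1, Nat.mul_comm]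
      rw [mul_pow, ← MvPolynomial.C_pow, ← hexp, MvPolynomial.C_mul]
      ring
    rw [Finset.sum_congr rfl fun k _ => expand k, Finset.sum_comm]
    rw [Finset.sum_eq_single (d-1)]
    · have h1 : d - (d-1) = 1 := by omega
      have h2 : (d.choose (d-1) : MvPolynomial (Fin 2) ℂ) = C (d:ℂ) := by
        rw [show d.choose (d-1) = d by
          rw [show d - 1 = d - 1 from rfl, Nat.choose_symm (by omega : 1 ≤ d),
            Nat.choose_one_right]]
        simp
      rw [← Finset.sum_mul, ← Finset.sum_mul, ← map_sum, hS (d-1) (by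
        rw [Finset.mem_range]; omega), if_pos rfl, h1, pow_one, h2, pow_two,
        MvPolynomial.C_mul]
      ring
    · intro j hj hjne
      rw [← Finset.sum_mul, ← Finset.sum_mul, ← map_sum, hS j hj, if_neg hjne]
      simp
    · intro h
      exact absurd (Finset.mem_range.2 (by omega)) h
  have hroot : ∀ k : Fin d, ∃ w : ℂ, w ^ d = ζ ^ ((k:ℕ)*(d-1)) / (d:ℂ)^2 := fun k =>
    IsAlgClosed.exists_pow_nat_eq _ (by omega)
  choose e he using hroot
  refine ⟨fun k => C (e k) * (X 0 + C (ζ ^ (k:ℕ)) * X 1), fun k => ?_, ?_⟩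
  · have h0 : (C (e k) : MvPolynomial (Fin 2) ℂ).IsHomogeneous 0 := isHomogeneous_C _ _
    have h1 : ((X 0 + C (ζ ^ (k:ℕ)) * X 1) : MvPolynomial (Fin 2) ℂ).IsHomogeneous 1 := by
      refine (isHomogeneous_X _ _).add ?_
      simpa using (isHomogeneous_C (Fin 2) (ζ ^ (k:ℕ))).mul (isHomogeneous_X _ 1)
    simpa using h0.mul h1
  · have hd2 : ((d:ℂ)^2) ≠ 0 := by
      exact pow_ne_zero 2 (Nat.cast_ne_zero.2 (by omega))
    have step : ∀ k : Fin d, ((C (e k) : MvPolynomial (Fin 2) ℂ) * (X 0 + C (ζ ^ (k:ℕ)) * X 1)) ^ d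
        = C ((1:ℂ)/(d:ℂ)^2) * (C (ζ ^ ((k:ℕ)*(d-1))) * (X 0 + C (ζ ^ (k:ℕ)) * X 1) ^ d) := by
      intro k
      rw [mul_pow, ← MvPolynomial.C_pow, he k, ← mul_assoc, ← MvPolynomial.C_mul]
      congr 2
      field_simp
    have hsum2 : (∑ k : Fin d, ((C (e k) : MvPolynomial (Fin 2) ℂ) * (X 0 + C (ζ ^ (k:ℕ)) * X 1)) ^ d)
        = ∑ k : Fin d, C ((1:ℂ)/(d:ℂ)^2)
            * (C (ζ ^ ((k:ℕ)*(d-1))) * (X 0 + C (ζ ^ (k:ℕ)) * X 1) ^ d) :=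
      Finset.sum_congr rfl fun k _ => step k
    have final : ∑ k : Fin d, ((C (e k) : MvPolynomial (Fin 2) ℂ) * (X 0 + C (ζ ^ (k:ℕ)) * X 1)) ^ d
        = (X 0 ^ (d-1) * X 1 : MvPolynomial (Fin 2) ℂ) := by
      refine hsum2.trans ?_
      rw [← Finset.mul_sum]
      have h3 : ∑ k : Fin d, (C (ζ ^ ((k:ℕ)*(d-1))) : MvPolynomial (Fin 2) ℂ)
          * (X 0 + C (ζ ^ (k:ℕ)) * X 1) ^ d = C ((d:ℂ)^2) * (X 0 ^ (d-1) * X 1) := by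
        rw [← key]
        exact Fin.sum_univ_eq_sum_range
          (fun k => (C (ζ ^ (k*(d-1))) : MvPolynomial (Fin 2) ℂ)
            * (X 0 + C (ζ ^ k) * X 1) ^ d) d
      rw [h3, ← mul_assoc, ← MvPolynomial.C_mul, one_div,
        inv_mul_cancel₀ hd2, MvPolynomial.C_1, one_mul]
    exact final.symm

theorem stmt4 (d : ℕ) (hd : 2 ≤ d) :
    IsLeast {r : ℕ | ∃ ℓ : Fin r → MvPolynomial (Fin 2) ℂ,
        (∀ i, (ℓ i).IsHomogeneous 1) ∧
        (X 0 ^ (d - 1) * X 1 : MvPolynomial (Fin 2) ℂ) = ∑ i, ℓ i ^ d} d := by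
  constructor
  · exact mem_part d hd
  · rintro r ⟨ℓ, h1, h2⟩
    exact lower d hd r ℓ h1 h2
end

section
/- For k ≥ 1 and d_1,…,d_k ≥ 2, the flattening map T_{1,…,1} : (ℂ²)^{*⊗k} → S^{d_1−1}ℂ² ⊗ ⋯ ⊗ S^{d_k−1}ℂ² associated with T = W_{d_1} ⊗ ⋯ ⊗ W_{d_k}, given on decomposable elements D_1 ⊗ ⋯ ⊗ D_k by component-wise differentiation D_1(W_{d_1}) ⊗ ⋯ ⊗ D_k(W_{d_k}), is injective; in particular its rank is 2^k. -/
open MvPolynomial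
open scoped TensorProduct

/-- The contraction (first catalecticant) of the W-state `W_d = x^{d-1} y`,
sending `(a, b)`, representing `a ∂_x + b ∂_y`, to `(a ∂_x + b ∂_y)(x^{d-1} y)`. -/
noncomputable def contrMap (d : ℕ) : (ℂ × ℂ) →ₗ[ℂ] MvPolynomial (Fin 2) ℂ :=
  (LinearMap.fst ℂ ℂ ℂ).smulRight (pderiv (0 : Fin 2) (X 0 ^ (d - 1) * X 1))
    + (LinearMap.snd ℂ ℂ ℂ).smulRight (pderiv (1 : Fin 2) (X 0 ^ (d - 1) * X 1))


lemma contr_apply (d : ℕ) (v : ℂ × ℂ) :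
    contrMap d v = v.1 • ((d-1 : ℕ) • (monomial (Finsupp.single 0 (d-2) + Finsupp.single 1 1) (1:ℂ)))
      + v.2 • (monomial (Finsupp.single 0 (d-1)) (1:ℂ)) := by
  have h0 : pderiv (0 : Fin 2) (X 0 ^ (d - 1) * X 1 : MvPolynomial (Fin 2) ℂ)
      = (d - 1 : ℕ) • (monomial (Finsupp.single 0 (d-2) + Finsupp.single 1 1) (1:ℂ)) := by
    rw [pderiv_mul, pderiv_pow, pderiv_X_self, pderiv_X_of_ne (by decide)]
    simp [Nat.sub_sub, monomial_add_single, X_pow_eq_monomial, smul_mul_assoc, mul_assoc]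
  have h1 : pderiv (1 : Fin 2) (X 0 ^ (d - 1) * X 1 : MvPolynomial (Fin 2) ℂ)
      = monomial (Finsupp.single 0 (d-1)) (1:ℂ) := by
    rw [pderiv_mul, pderiv_pow, pderiv_X_self, pderiv_X_of_ne (by decide)]
    simp [X_pow_eq_monomial]
  simp [contrMap, h0, h1]

lemma contr_injective (d : ℕ) (hd : 2 ≤ d) : Function.Injective (contrMap d) := by
  rw [← LinearMap.ker_eq_bot, LinearMap.ker_eq_bot']
  rintro ⟨a, b⟩ h
  rw [contr_apply] at h
  have hne : (Finsupp.single 0 (d-2) + Finsupp.single 1 1 : Fin 2 →₀ ℕ) ≠ Finsupp.single 0 (d-1) := by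
    intro he
    have := DFunLike.congr_fun he 1
    simp [Finsupp.single_apply] at this
  have hne' := Ne.symm hne
  have hb : b = 0 := by
    have := congrArg (coeff (Finsupp.single 0 (d-1))) h
    simp only [coeff_add, coeff_smul, coeff_monomial, map_zero, if_neg hne, if_pos rfl] at this
    simpa using this
  have ha : a = 0 := by
    have := congrArg (coeff (Finsupp.single 0 (d-2) + Finsupp.single 1 1)) h
    simp only [coeff_add, coeff_smul, coeff_monomial, map_zero, if_pos rfl,
      if_neg hne'] at this
    rcases (by simpa using this : a = 0 ∨ d - 1 = 0) with h' | h'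
    · exact h'
    · omega
  simp [ha, hb]

lemma dim_aux : ∀ k : ℕ, Module.Finite ℂ (⨂[ℂ] _ : Fin k, (ℂ × ℂ))
    ∧ Module.Free ℂ (⨂[ℂ] _ : Fin k, (ℂ × ℂ))
    ∧ Module.finrank ℂ (⨂[ℂ] _ : Fin k, (ℂ × ℂ)) = 2 ^ k := by
  intro k
  induction k with
  | zero =>
    have e : (⨂[ℂ] _ : Fin 0, (ℂ × ℂ)) ≃ₗ[ℂ] ℂ := PiTensorProduct.isEmptyEquiv (Fin 0)
    exact ⟨Module.Finite.equiv e.symm, Module.Free.of_equiv e.symm, by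
      rw [e.finrank_eq]; simp⟩
  | succ k ih =>
    obtain ⟨ihF, ihfree, ihrank⟩ := ih
    have e1 : (⨂[ℂ] _ : Fin 1, (ℂ × ℂ)) ≃ₗ[ℂ] (ℂ × ℂ) :=
      PiTensorProduct.subsingletonEquiv 0
    have E : (⨂[ℂ] _ : Fin (k+1), (ℂ × ℂ)) ≃ₗ[ℂ] (⨂[ℂ] _ : Fin k, (ℂ × ℂ)) ⊗[ℂ] (ℂ × ℂ) :=
      (PiTensorProduct.reindex ℂ (fun _ : Fin (k+1) => (ℂ × ℂ)) finSumFinEquiv.symm) ≪≫ₗ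
        (PiTensorProduct.tmulEquiv ℂ (ℂ × ℂ)).symm ≪≫ₗ
        TensorProduct.congr (LinearEquiv.refl ℂ _) e1
    haveI := ihF; haveI := ihfree
    haveI hFin : Module.Finite ℂ (⨂[ℂ] _ : Fin (k+1), (ℂ × ℂ)) := Module.Finite.equiv E.symm
    haveI hFree : Module.Free ℂ (⨂[ℂ] _ : Fin (k+1), (ℂ × ℂ)) := Module.Free.of_equiv E.symm
    refine ⟨hFin, hFree, ?_⟩
    have hE : Module.finrank ℂ (⨂[ℂ] _ : Fin (k+1), (ℂ × ℂ))
        = Module.finrank ℂ ((⨂[ℂ] _ : Fin k, (ℂ × ℂ)) ⊗[ℂ] (ℂ × ℂ)) :=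
      LinearEquiv.finrank_eq E
    rw [hE, Module.finrank_tensorProduct, ihrank]
    simp [pow_succ]

theorem stmt6 (k : ℕ) (hk : 1 ≤ k) (d : Fin k → ℕ) (hd : ∀ i, 2 ≤ d i) :
    Function.Injective (PiTensorProduct.map (fun i : Fin k => contrMap (d i))) ∧
      Module.finrank ℂ
        (LinearMap.range (PiTensorProduct.map (fun i : Fin k => contrMap (d i)))) = 2 ^ k := by
  have hker : ∀ i : Fin k, LinearMap.ker (contrMap (d i)) = ⊥ :=
    fun i => LinearMap.ker_eq_bot.mpr (contr_injective (d i) (hd i))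
  choose g hg using fun i => (contrMap (d i)).exists_leftInverse_of_injective (hker i)
  have hcomp : (PiTensorProduct.map g) ∘ₗ (PiTensorProduct.map (fun i : Fin k => contrMap (d i)))
      = LinearMap.id := by
    rw [← PiTensorProduct.map_comp]
    have : (fun i : Fin k => g i ∘ₗ contrMap (d i)) = fun _ => LinearMap.id := funext hg
    rw [this, PiTensorProduct.map_id]
  have hinj : Function.Injective (PiTensorProduct.map (fun i : Fin k => contrMap (d i))) := by
    intro x y hxy
    have := congrArg (PiTensorProduct.map g) hxy
    simpa [← LinearMap.comp_apply, hcomp] using this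
  refine ⟨hinj, ?_⟩
  have hE : Module.finrank ℂ (⨂[ℂ] _ : Fin k, (ℂ × ℂ)) = Module.finrank ℂ
      (LinearMap.range (PiTensorProduct.map (fun i : Fin k => contrMap (d i)))) :=
    LinearEquiv.finrank_eq (LinearEquiv.ofInjective _ hinj)
  rw [← hE, (dim_aux k).2.2]
end

section
/- For k ≥ 1, a point p = (p_1,…,p_k) ∈ ℂ^k satisfies p_i p_j (p_i − p_j) = 0 for all 1 ≤ i < j ≤ k if and only if there exists a subset Λ ⊆ {1,…,k} and a scalar t ∈ ℂ such that p_i = t for i ∈ Λ and p_i = 0 for i ∉ Λ. -/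
theorem stmt7 (k : ℕ) (hk : 1 ≤ k) (p : Fin k → ℂ) :
    (∀ i j : Fin k, i < j → p i * p j * (p i - p j) = 0) ↔
      ∃ (Λ : Finset (Fin k)) (t : ℂ), ∀ i, p i = if i ∈ Λ then t else 0 := by
  constructor
  · intro h
    have key : ∀ i j : Fin k, p i ≠ 0 → p j ≠ 0 → p i = p j := by
      intro i j hi hj
      rcases lt_trichotomy i j with hij | hij | hij
      · have := h i j hij
        have : p i - p j = 0 := by
          rcases mul_eq_zero.1 this with h1 | h2
          · rcases mul_eq_zero.1 h1 with h3 | h4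
            · exact absurd h3 hi
            · exact absurd h4 hj
          · exact h2
        exact sub_eq_zero.1 this
      · rw [hij]
      · have := h j i hij
        have : p j - p i = 0 := by
          rcases mul_eq_zero.1 this with h1 | h2
          · rcases mul_eq_zero.1 h1 with h3 | h4
            · exact absurd h3 hj
            · exact absurd h4 hi
          · exact h2
        exact (sub_eq_zero.1 this).symm
    classical
    by_cases hall : ∀ i, p i = 0
    · exact ⟨∅, 0, fun i => by simp [hall i]⟩
    · push_neg at hall
      obtain ⟨i₀, hi₀⟩ := hall
      refine ⟨Finset.univ.filter (fun i => p i ≠ 0), p i₀, fun i => ?_⟩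
      by_cases hi : p i = 0 <;> simp [hi]
      exact key i i₀ hi hi₀
  · rintro ⟨Λ, t, hp⟩ i j hij
    rw [hp i, hp j]
    by_cases hi : i ∈ Λ <;> by_cases hj : j ∈ Λ <;> simp [hi, hj]
end

section
/- Fix k ≥ 1 and t ≥ k+1. The number of monomials η^α = η_1^{α_1}⋯η_k^{α_k} of total degree t that are not divisible by η_i²η_j for any pair i < j equals 2^k − 1. -/
/-!
An admissible exponent vector `α` is determined by its support `S` and its degree `t`: if `m` is
the largest index of `S`, then every `i < m` in `S` has `α i = 1` (otherwise `η_i² η_m` divides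
`η^α`), so all the remaining mass `t - (#S - 1)` sits at `m`. Conversely, for `t ≥ k` every
nonempty `S` arises this way, giving a bijection with the `2 ^ k - 1` nonempty subsets of indices.
-/

open Finset

theorem Fintype.eq_of_sum_eq_of_forall_ne {ι M : Type*} [Fintype ι] [DecidableEq ι]
    [AddCancelCommMonoid M] {f g : ι → M} (a : ι) (hsum : ∑ i, f i = ∑ i, g i)
    (hne : ∀ i, i ≠ a → f i = g i) : f = g := by
  have hrest : ∑ i ∈ {a}ᶜ, f i = ∑ i ∈ {a}ᶜ, g i :=
    Finset.sum_congr rfl fun i hi => hne i (by simpa using hi)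
  rw [Fintype.sum_eq_add_sum_compl a, Fintype.sum_eq_add_sum_compl a g, hrest] at hsum
  funext i
  obtain rfl | hi := eq_or_ne i a
  · exact add_right_cancel hsum
  · exact hne i hi

theorem Fintype.card_nonempty_finset (ι : Type*) [Fintype ι] :
    Nat.card {S : Finset ι // S.Nonempty} = 2 ^ Fintype.card ι - 1 := by
  classical
  rw [Nat.card_congr (Equiv.subtypeEquivRight fun S => nonempty_iff_ne_empty),
    Nat.card_eq_fintype_card, Fintype.card_subtype_compl, Fintype.card_subtype_eq,
    Fintype.card_finset]

namespace MonomialExponent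

variable {ι : Type*}

def nzSupport [Fintype ι] (α : ι → ℕ) : Finset ι := {i | α i ≠ 0}

@[simp]
theorem mem_nzSupport [Fintype ι] {α : ι → ℕ} {i : ι} : i ∈ nzSupport α ↔ α i ≠ 0 := by
  simp [nzSupport]

theorem nzSupport_nonempty_of_sum_ne_zero [Fintype ι] {α : ι → ℕ} (h : ∑ i, α i ≠ 0) :
    (nzSupport α).Nonempty := by
  obtain ⟨i, -, hi⟩ := exists_ne_zero_of_sum_ne_zero h
  exact ⟨i, mem_nzSupport.2 hi⟩

variable [LinearOrder ι]

/-- `η^α` is divisible by no `η_i² η_j` with `i < j`. -/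
def Admissible (α : ι → ℕ) : Prop :=
  ∀ i j, i < j → ¬(2 ≤ α i ∧ 1 ≤ α j)

def ofSupport (t : ℕ) (S : Finset ι) (hS : S.Nonempty) : ι → ℕ :=
  fun i => (if i ∈ S then 1 else 0) + (Pi.single (S.max' hS) (t - #S) : ι → ℕ) i

variable {t : ℕ} {S : Finset ι} {hS : S.Nonempty}

theorem ofSupport_of_ne_max' {i : ι} (hi : i ≠ S.max' hS) :
    ofSupport t S hS i = if i ∈ S then 1 else 0 := by
  simp [ofSupport, hi]

variable [Fintype ι]

theorem sum_ofSupport (h : #S ≤ t) : ∑ i, ofSupport t S hS i = t := by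
  simp only [ofSupport, sum_add_distrib, sum_boole, Fintype.sum_pi_single', filter_mem_eq_inter,
    univ_inter, Nat.cast_id]
  omega

theorem nzSupport_ofSupport : nzSupport (ofSupport t S hS) = S := by
  ext i
  by_cases hi : i ∈ S
  · simp [ofSupport, hi]
  · have him : i ≠ S.max' hS := fun h => hi (h ▸ S.max'_mem hS)
    simp [ofSupport_of_ne_max' him, hi]

theorem admissible_ofSupport : Admissible (ofSupport t S hS) := by
  rintro i j hij ⟨hi, hj⟩
  have him : i = S.max' hS := by
    by_contra h
    rw [ofSupport_of_ne_max' h] at hi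
    split_ifs at hi <;> omega
  have hjS : j ∈ S := nzSupport_ofSupport (t := t) (hS := hS) ▸ mem_nzSupport.2 (by omega)
  exact (S.le_max' j hjS).not_gt (him ▸ hij)

theorem Admissible.apply_of_ne_max' {α : ι → ℕ} (hα : Admissible α) (hS : (nzSupport α).Nonempty)
    {i : ι} (hi : i ≠ (nzSupport α).max' hS) : α i = if i ∈ nzSupport α then 1 else 0 := by
  have hm := mem_nzSupport.1 ((nzSupport α).max'_mem hS)
  split_ifs with hiS
  · have hlt := lt_of_le_of_ne ((nzSupport α).le_max' i hiS) hi
    have hαi := mem_nzSupport.1 hiS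
    have hnot := hα i _ hlt
    omega
  · simpa using hiS

theorem Admissible.eq_ofSupport {α : ι → ℕ} (hα : Admissible α) (hsum : ∑ i, α i = t)
    (hS : (nzSupport α).Nonempty) (hcard : #(nzSupport α) ≤ t) :
    α = ofSupport t (nzSupport α) hS := by
  refine Fintype.eq_of_sum_eq_of_forall_ne ((nzSupport α).max' hS) ?_ fun i hi => ?_
  · rw [hsum, sum_ofSupport hcard]
  · rw [hα.apply_of_ne_max' hS hi, ofSupport_of_ne_max' hi]

def admissibleEquivNonempty (t : ℕ) (ht₀ : 0 < t) (ht : Fintype.card ι ≤ t) :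
    {α : ι → ℕ // ∑ i, α i = t ∧ Admissible α} ≃ {S : Finset ι // S.Nonempty} where
  toFun α := ⟨nzSupport α.1, nzSupport_nonempty_of_sum_ne_zero (by omega)⟩
  invFun S := ⟨ofSupport t S.1 S.2, sum_ofSupport (S.1.card_le_univ.trans ht),
    admissible_ofSupport⟩
  left_inv α := Subtype.ext (α.2.2.eq_ofSupport α.2.1 _ ((card_le_univ _).trans ht)).symm
  right_inv S := Subtype.ext nzSupport_ofSupport

theorem card_admissible (t : ℕ) (ht₀ : 0 < t) (ht : Fintype.card ι ≤ t) :
    Nat.card {α : ι → ℕ // ∑ i, α i = t ∧ Admissible α} = 2 ^ Fintype.card ι - 1 := by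
  rw [Nat.card_congr (admissibleEquivNonempty t ht₀ ht), Fintype.card_nonempty_finset]

end MonomialExponent

theorem stmt9_general (k t : ℕ) (ht : k + 1 ≤ t) :
    Nat.card {α : Fin k → ℕ // (∑ i, α i = t) ∧
        ∀ i j : Fin k, i < j → ¬(2 ≤ α i ∧ 1 ≤ α j)} = 2 ^ k - 1 := by
  have hcard : Fintype.card (Fin k) ≤ t := by rw [Fintype.card_fin]; omega
  exact (MonomialExponent.card_admissible t (by omega) hcard).trans (by rw [Fintype.card_fin])

theorem stmt9 (k t : ℕ) (hk : 1 ≤ k) (ht : k + 1 ≤ t) :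
    Nat.card {α : Fin k → ℕ // (∑ i, α i = t) ∧
        ∀ i j : Fin k, i < j → ¬(2 ≤ α i ∧ 1 ≤ α j)} = 2 ^ k - 1 :=
  stmt9_general k t ht
end

section
/- Let V be a finite-dimensional complex vector space, p ∈ V a nonzero vector, and let S₁, S₂ be finite sets of vectors in V with S₁ ≠ S₂ such that for i = 1,2: p lies in the linear span of S_i but p does not lie in the linear span of any proper subset of S_i. Then the set S₁ ∪ S₂ is linearly dependent. -/
open Classical in
lemma aux {V : Type*} [AddCommGroup V] [Module ℂ V]
    (p : V) (S₁ S₂ : Finset V) (x : V) (hx : x ∈ S₁) (hx2 : x ∉ S₂)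
    (h₁ : p ∈ Submodule.span ℂ (S₁ : Set V))
    (h₁min : ∀ S : Finset V, S ⊂ S₁ → p ∉ Submodule.span ℂ (S : Set V))
    (h₂ : p ∈ Submodule.span ℂ (S₂ : Set V))
    (h : LinearIndependent ℂ (fun v : ((S₁ : Set V) ∪ (S₂ : Set V) : Set V) => (v : V))) :
    False := by
  have hdisj : Disjoint (Submodule.span ℂ ((S₁ : Set V) \ (S₂ : Set V)))
      (Submodule.span ℂ ((S₂ : Set V))) := by
    have := h.disjoint_span_image (s := Subtype.val ⁻¹' ((S₁ : Set V) \ (S₂ : Set V)))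
      (t := Subtype.val ⁻¹' ((S₂ : Set V))) ?_
    · convert this using 2 <;>
      · rw [Set.image_preimage_eq_inter_range, Subtype.range_coe, Set.inter_eq_left.2]
        · intro y hy
          first
          | exact Set.mem_union_left _ hy.1
          | exact Set.mem_union_right _ hy
    · rw [Set.disjoint_iff]
      rintro i ⟨hi1, hi2⟩
      exact hi1.2 hi2
  -- decompose p
  have hsplit : (S₁ : Set V) = ((S₁ : Set V) ∩ (S₂ : Set V)) ∪ ((S₁ : Set V) \ (S₂ : Set V)) :=
    (Set.inter_union_diff _ _).symm
  rw [hsplit, Submodule.span_union, Submodule.mem_sup] at h₁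
  obtain ⟨a, ha, b, hb, hab⟩ := h₁
  have hbS₂ : b ∈ Submodule.span ℂ ((S₂ : Set V)) := by
    have haS₂ : a ∈ Submodule.span ℂ ((S₂ : Set V)) :=
      Submodule.span_mono Set.inter_subset_right ha
    have : b = p - a := by rw [← hab]; abel
    rw [this]; exact Submodule.sub_mem _ h₂ haS₂
  have hb0 : b = 0 := Submodule.disjoint_def.1 hdisj b hb hbS₂
  have hpa : p ∈ Submodule.span ℂ (((S₁ ∩ S₂ : Finset V) : Set V)) := by
    rw [Finset.coe_inter]
    rw [hb0, add_zero] at hab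
    exact hab ▸ ha
  exact h₁min (S₁ ∩ S₂) ⟨Finset.inter_subset_left, fun hsub => hx2 (Finset.mem_inter.1 (hsub hx)).2⟩ hpa

theorem stmt11 {V : Type*} [AddCommGroup V] [Module ℂ V] [FiniteDimensional ℂ V]
    (p : V) (hp : p ≠ 0) (S₁ S₂ : Finset V) (hne : S₁ ≠ S₂)
    (h₁ : p ∈ Submodule.span ℂ (S₁ : Set V))
    (h₁min : ∀ S : Finset V, S ⊂ S₁ → p ∉ Submodule.span ℂ (S : Set V))
    (h₂ : p ∈ Submodule.span ℂ (S₂ : Set V))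
    (h₂min : ∀ S : Finset V, S ⊂ S₂ → p ∉ Submodule.span ℂ (S : Set V)) :
    ¬ LinearIndependent ℂ (fun v : ((S₁ : Set V) ∪ (S₂ : Set V) : Set V) => (v : V)) := by
  intro h
  have h12 : ¬ (S₁ ⊆ S₂) ∨ ¬ (S₂ ⊆ S₁) := by
    by_contra hc
    push_neg at hc
    exact hne (Finset.Subset.antisymm hc.1 hc.2)
  rcases h12 with hs | hs
  · obtain ⟨x, hx, hx2⟩ := Finset.not_subset.1 hs
    exact aux p S₁ S₂ x hx hx2 h₁ h₁min h₂ h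
  · obtain ⟨x, hx, hx2⟩ := Finset.not_subset.1 hs
    exact aux p S₂ S₁ x hx hx2 h₂ h₂min h₁ (by rwa [Set.union_comm] at h)
end

section
/- For d₁, d₂ ≥ 1, define the linear map Φ : (ℂ²)^{⊗d₁} ⊗ (ℂ²)^{⊗d₂} → (ℂ²)^{⊗(d₁−1)} ⊗ ℂ² ⊗ (ℂ²)^{⊗(d₂−1)} as identity on all factors except the d₁-th and (d₁+1)-th, on which it acts by the bilinear map φ(ℓ₁ ⊗ ℓ₂) = (∂_x ℓ₁ · ∂_y ℓ₂ + ∂_y ℓ₁ · ∂_x ℓ₂)·x + (∂_y ℓ₁ · ∂_y ℓ₂)·y. Then Φ maps W_{d₁} ⊗ W_{d₂} to W_{d₁+d₂−1} (after identifying all tensor factors ℂ² with a common copy), where W_d denotes the symmetrization of x^{d−1}y, i.e., the sum of all tensor words in x, y of length d containing exactly one y. -/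
/-- The coordinate model of `(ℂ²)^{⊗ι}`: a tensor is given by its coordinates in the
standard basis, indexed by words in the two basis vectors `x` (= `false`) and
`y` (= `true`). -/
abbrev Tens (ι : Type*) := (ι → Bool) → ℂ

/-- The W-state `W_d`: the sum of all tensor words in `x, y` containing exactly one `y`. -/
noncomputable def Wstate (ι : Type*) [Fintype ι] [DecidableEq ι] : Tens ι :=
  fun f => if (Finset.univ.filter fun i => f i = true).card = 1 then 1 else 0

/-- The tensor product `T ⊗ S` in coordinates. -/
noncomputable def prodT {ι₁ ι₂ : Type*} (T : Tens ι₁) (S : Tens ι₂) : Tens (ι₁ ⊕ ι₂) :=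
  fun f => T (f ∘ Sum.inl) * S (f ∘ Sum.inr)

/-- The matrix coefficients of the bilinear map
`φ(ℓ₁ ⊗ ℓ₂) = (∂_x ℓ₁ ∂_y ℓ₂ + ∂_y ℓ₁ ∂_x ℓ₂) x + (∂_y ℓ₁ ∂_y ℓ₂) y`:
`phiCoef out b₁ b₂` is the coefficient of the basis vector `out` in `φ(b₁ ⊗ b₂)`. -/
noncomputable def phiCoef (out b₁ b₂ : Bool) : ℂ :=
  if out then (if b₁ && b₂ then 1 else 0) else (if b₁ ≠ b₂ then 1 else 0)

/-- The map `Φ`: identity on all tensor factors except the `d₁`-th and `(d₁+1)`-th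
(the last factor of the first group and the first factor of the second group,
`d₁ = e₁ + 1`, `d₂ = e₂ + 1`), on which it acts by `φ`. -/
noncomputable def Phi (e₁ e₂ : ℕ) (T : Tens (Fin (e₁ + 1) ⊕ Fin (e₂ + 1))) :
    Tens (Fin e₁ ⊕ (Unit ⊕ Fin e₂)) :=
  fun g => ∑ b₁ : Bool, ∑ b₂ : Bool,
    phiCoef (g (Sum.inr (Sum.inl ()))) b₁ b₂ *
      T (fun i => match i with
        | Sum.inl j => if h : (j : ℕ) < e₁ then g (Sum.inl ⟨j, h⟩) else b₁
        | Sum.inr j => if h : (j : ℕ) = 0 then b₂ else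
            g (Sum.inr (Sum.inr ⟨(j : ℕ) - 1, by have := j.isLt; omega⟩)))

lemma card_last {n : ℕ} (u : Fin n → Bool) (b : Bool) :
    (Finset.univ.filter fun i : Fin (n+1) =>
        (if h : (i:ℕ) < n then u ⟨i,h⟩ else b) = true).card
      = (Finset.univ.filter fun i => u i = true).card + (if b then 1 else 0) := by
  rw [Finset.card_filter, Finset.card_filter, Fin.sum_univ_castSucc]
  simp [Fin.is_lt]

lemma card_first {n : ℕ} (u : Fin n → Bool) (b : Bool) :
    (Finset.univ.filter fun j : Fin (n+1) =>
        (if h : (j:ℕ) = 0 then b else u ⟨(j:ℕ) - 1, by have := j.isLt; omega⟩) = true).card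
      = (if b then 1 else 0) + (Finset.univ.filter fun i => u i = true).card := by
  rw [Finset.card_filter, Finset.card_filter, Fin.sum_univ_succ]
  congr 1


lemma card_sum3 {e₁ e₂ : ℕ} (g : Fin e₁ ⊕ Unit ⊕ Fin e₂ → Bool) :
    (Finset.univ.filter fun i => g i = true).card =
      (Finset.univ.filter fun i : Fin e₁ => g (Sum.inl i) = true).card
      + ((if g (Sum.inr (Sum.inl ())) then 1 else 0)
      + (Finset.univ.filter fun i : Fin e₂ => g (Sum.inr (Sum.inr i)) = true).card) := by
  rw [Finset.card_filter, Fintype.sum_sum_type, Fintype.sum_sum_type,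
    Finset.card_filter, Finset.card_filter]
  simp [Finset.filter_singleton, apply_ite Finset.card]


theorem stmt14 (e₁ e₂ : ℕ) :
    Phi e₁ e₂ (prodT (Wstate (Fin (e₁ + 1))) (Wstate (Fin (e₂ + 1)))) =
      Wstate (Fin e₁ ⊕ (Unit ⊕ Fin e₂)) := by
  funext g
  simp only [Phi, prodT, Wstate, phiCoef, Fintype.sum_bool, Function.comp]
  rw [card_sum3]
  have A : ∀ b : Bool, (Finset.univ.filter fun i : Fin (e₁+1) =>
      (if h : (i:ℕ) < e₁ then g (Sum.inl ⟨↑i, h⟩) else b) = true).card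
      = (Finset.univ.filter fun i : Fin e₁ => g (Sum.inl i) = true).card
        + (if b then 1 else 0) := fun b => card_last (fun i => g (Sum.inl i)) b
  have B : ∀ b : Bool, (Finset.univ.filter fun j : Fin (e₂+1) =>
      (if h : (j:ℕ) = 0 then b else g (Sum.inr (Sum.inr ⟨(j:ℕ) - 1, by have := j.isLt; omega⟩))) = true).card
      = (if b then 1 else 0)
        + (Finset.univ.filter fun i : Fin e₂ => g (Sum.inr (Sum.inr i)) = true).card :=
    fun b => card_first (fun i => g (Sum.inr (Sum.inr i))) b
  simp only [A, B]
  clear A B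
  cases hm : g (Sum.inr (Sum.inl ())) <;>
    simp only [hm, Bool.false_eq_true, if_true, if_false, ite_true, ite_false, ne_eq,
      Bool.and_self, Bool.true_and, Bool.and_false, Bool.false_and, not_false_eq_true,
      not_true_eq_false] <;>
    split_ifs <;> first | contradiction | (exfalso; omega) | norm_num
end

section
/- For all d₁, d₂ ≥ 1, the tensor rank of W_{d₁} ⊗ W_{d₂} as an element of (ℂ²)^{⊗(d₁+d₂)} is at least d₁ + d₂ − 1. -/
open scoped TensorProduct
open PiTensorProduct

/-- Tensor rank of an element of `(ℂ²)^{⊗ι}`: the minimal number of decomposable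
tensors summing to it. -/
noncomputable def tRank {ι : Type*} (T : ⨂[ℂ] (_ : ι), (ℂ × ℂ)) : ℕ :=
  sInf {r : ℕ | ∃ v : Fin r → ι → ℂ × ℂ, T = ∑ a : Fin r, tprod ℂ (v a)}

/-- `W_{d₁} ⊗ W_{d₂}` as an element of `(ℂ²)^{⊗(d₁+d₂)}`, with the tensor factors
indexed by `Fin d₁ ⊕ Fin d₂` and `x = (1,0)`, `y = (0,1)`. -/
noncomputable def WtensorW (d₁ d₂ : ℕ) : ⨂[ℂ] (_ : Fin d₁ ⊕ Fin d₂), (ℂ × ℂ) :=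
  ∑ p : Fin d₁ × Fin d₂, tprod ℂ (fun i =>
    Sum.elim (fun a => if a = p.1 then ((0, 1) : ℂ × ℂ) else (1, 0))
      (fun b => if b = p.2 then ((0, 1) : ℂ × ℂ) else (1, 0)) i)

/-!
Merging the first factor of each W-state through the multiplication of `ℂ[ε]/(ε²)`, with
`x ↦ ε` and `y ↦ 1`, is a linear map sending decomposable tensors to decomposable tensors and
`W_{d₁} ⊗ W_{d₂}` to `W_{d₁+d₂-1}`: a word survives only if one of its two letters `y` sits in a
merged factor, and it then becomes a word with a single `y`. So it suffices that `W_n` has rank at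
least `n`. This is the substitution method: contracting the first factor of a decomposition of
`W_n + e x^{⊗n}` with the two coordinate functionals and eliminating one summand leaves a
decomposition of `W_{n-1} + e' x^{⊗(n-1)}` with one term fewer.
-/

local notation "𝐱" => ((1, 0) : ℂ × ℂ)
local notation "𝐲" => ((0, 1) : ℂ × ℂ)

noncomputable section

section Decomposition

variable {ι κ : Type*}

-- The scalars matter only for tensors with no factors, where they cannot be absorbed.
def HasDecomposition (T : ⨂[ℂ] (_ : ι), ℂ × ℂ) (r : ℕ) : Prop :=
  ∃ (c : Fin r → ℂ) (v : Fin r → ι → ℂ × ℂ), T = ∑ a, c a • tprod ℂ (v a)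

lemma hasDecomposition_tRank_sum_tprod {α : Type*} [Fintype α] (f : α → ι → ℂ × ℂ) :
    HasDecomposition (∑ p, tprod ℂ (f p)) (tRank (∑ p, tprod ℂ (f p))) := by
  obtain ⟨v, hv⟩ : tRank (∑ p, tprod ℂ (f p)) ∈
      {r | ∃ v : Fin r → ι → ℂ × ℂ, ∑ p, tprod ℂ (f p) = ∑ a, tprod ℂ (v a)} :=
    Nat.sInf_mem ⟨_, f ∘ (Fintype.equivFin α).symm,
      (Equiv.sum_comp (Fintype.equivFin α).symm _).symm⟩
  exact ⟨fun _ => 1, v, by simpa using hv⟩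

lemma HasDecomposition.map {T : ⨂[ℂ] (_ : ι), ℂ × ℂ} {r : ℕ} (hT : HasDecomposition T r)
    (Φ : (⨂[ℂ] (_ : ι), ℂ × ℂ) →ₗ[ℂ] ⨂[ℂ] (_ : κ), ℂ × ℂ) (g : (ι → ℂ × ℂ) → κ → ℂ × ℂ)
    (hΦ : ∀ v, Φ (tprod ℂ v) = tprod ℂ (g v)) : HasDecomposition (Φ T) r := by
  obtain ⟨c, v, rfl⟩ := hT
  exact ⟨c, g ∘ v, by simp [hΦ]⟩

lemma HasDecomposition.reindex {T : ⨂[ℂ] (_ : ι), ℂ × ℂ} {r : ℕ}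
    (hT : HasDecomposition T r) (e : ι ≃ κ) :
    HasDecomposition (PiTensorProduct.reindex ℂ (fun _ => ℂ × ℂ) e T) r :=
  hT.map (PiTensorProduct.reindex ℂ (fun _ => ℂ × ℂ) e).toLinearMap (· ∘ e.symm)
    fun v => reindex_tprod e v

end Decomposition

section Contraction

variable {n : ℕ}

def contractFirst (f : ℂ × ℂ →ₗ[ℂ] ℂ) :
    (⨂[ℂ] (_ : Fin (n + 1)), ℂ × ℂ) →ₗ[ℂ] ⨂[ℂ] (_ : Fin n), ℂ × ℂ :=
  lift (f.smulRight (PiTensorProduct.tprod ℂ)).uncurryLeft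

@[simp]
lemma contractFirst_tprod (f : ℂ × ℂ →ₗ[ℂ] ℂ) (v : Fin (n + 1) → ℂ × ℂ) :
    contractFirst f (tprod ℂ v) = f (v 0) • tprod ℂ (Fin.tail v) := by
  simp [contractFirst, LinearMap.uncurryLeft_apply]

lemma exists_hasDecomposition_contractFirst_sub {T : ⨂[ℂ] (_ : Fin (n + 1)), ℂ × ℂ} {r : ℕ}
    (hT : HasDecomposition T r) (f g : ℂ × ℂ →ₗ[ℂ] ℂ) (hg : contractFirst g T ≠ 0) :
    0 < r ∧ ∃ γ : ℂ, HasDecomposition (contractFirst f T - γ • contractFirst g T) (r - 1) := by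
  obtain ⟨c, v, rfl⟩ := hT
  have expand : ∀ h : ℂ × ℂ →ₗ[ℂ] ℂ, contractFirst h (∑ a, c a • tprod ℂ (v a)) =
      ∑ a, (c a * h (v a 0)) • tprod ℂ (Fin.tail (v a)) := by
    simp [map_sum, smul_smul]
  obtain ⟨a₀, -, ha₀⟩ := Finset.exists_ne_zero_of_sum_ne_zero (expand g ▸ hg)
  have hga₀ : g (v a₀ 0) ≠ 0 := by
    rintro h
    simp [h] at ha₀
  obtain ⟨r, rfl⟩ : ∃ r', r = r' + 1 := ⟨r - 1, by have := a₀.pos; omega⟩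
  set γ := f (v a₀ 0) / g (v a₀ 0)
  have combine : contractFirst f (∑ a, c a • tprod ℂ (v a)) -
      γ • contractFirst g (∑ a, c a • tprod ℂ (v a)) =
      ∑ a, (c a * (f (v a 0) - γ * g (v a 0))) • tprod ℂ (Fin.tail (v a)) := by
    rw [expand, expand, Finset.smul_sum, ← Finset.sum_sub_distrib]
    exact Finset.sum_congr rfl fun a _ => by module
  have h_a₀_cancels : f (v a₀ 0) - γ * g (v a₀ 0) = 0 := by rw [div_mul_cancel₀ _ hga₀, sub_self]
  refine ⟨r.succ_pos, γ, fun b => c (a₀.succAbove b) *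
      (f (v (a₀.succAbove b) 0) - γ * g (v (a₀.succAbove b) 0)),
    fun b => Fin.tail (v (a₀.succAbove b)), ?_⟩
  rw [combine, Fin.sum_univ_succAbove _ a₀, h_a₀_cancels, mul_zero, zero_smul, zero_add]
  rfl

end Contraction

section WState

variable {ι : Type*} [DecidableEq ι]

def wWord (i : ι) : ι → ℂ × ℂ := fun j => if j = i then 𝐲 else 𝐱

variable (ι) in
def wState [Fintype ι] : ⨂[ℂ] (_ : ι), ℂ × ℂ :=
  ∑ i, tprod ℂ (wWord i)

lemma wWord_comp_symm {κ : Type*} [DecidableEq κ] (e : ι ≃ κ) (i : ι) :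
    wWord i ∘ e.symm = wWord (e i) := by
  funext j
  simp [wWord, Equiv.symm_apply_eq]

lemma reindex_wState [Fintype ι] {κ : Type*} [Fintype κ] [DecidableEq κ] (e : ι ≃ κ) :
    reindex ℂ (fun _ => ℂ × ℂ) e (wState ι) = wState κ := by
  simp only [wState, map_sum, reindex_tprod]
  exact Fintype.sum_equiv e _ _ fun i => congrArg _ (wWord_comp_symm e i)

end WState

lemma tprod_ne_zero_of_fst_ne_zero {ι : Type*} [Fintype ι] {v : ι → ℂ × ℂ}
    (hv : ∀ i, (v i).1 ≠ 0) : tprod ℂ v ≠ 0 := by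
  intro h
  have := congrArg (lift ((MultilinearMap.mkPiAlgebra ℂ ι ℂ).compLinearMap
    fun _ => LinearMap.fst ℂ ℂ ℂ)) h
  simp only [lift.tprod, MultilinearMap.compLinearMap_apply, MultilinearMap.mkPiAlgebra_apply,
    LinearMap.fst_apply, map_zero] at this
  exact Finset.prod_ne_zero_iff.mpr (fun i _ => hv i) this

section WBound

variable {n : ℕ}

@[simp] lemma wWord_zero_zero : wWord (0 : Fin (n + 1)) 0 = 𝐲 := if_pos rfl

@[simp] lemma wWord_succ_zero (i : Fin n) : wWord i.succ 0 = 𝐱 := if_neg (Fin.succ_ne_zero i).symm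

@[simp] lemma tail_wWord_zero : Fin.tail (wWord (0 : Fin (n + 1))) = fun _ => 𝐱 := by
  funext j
  simp [Fin.tail, wWord, Fin.succ_ne_zero]

@[simp] lemma tail_wWord_succ (i : Fin n) : Fin.tail (wWord i.succ) = wWord i := by
  funext j
  simp [Fin.tail, wWord]

lemma contractFirst_wState_add (f : ℂ × ℂ →ₗ[ℂ] ℂ) (e : ℂ) :
    contractFirst f (wState (Fin (n + 1)) + e • tprod ℂ fun _ => 𝐱) =
      f 𝐲 • tprod ℂ (fun _ => 𝐱) + f 𝐱 • (wState (Fin n) + e • tprod ℂ fun _ => 𝐱) := by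
  simp only [wState, Fin.sum_univ_succ, map_add, map_sum, map_smul, contractFirst_tprod,
    wWord_zero_zero, wWord_succ_zero, tail_wWord_zero, tail_wWord_succ, ← Finset.smul_sum]
  rw [show Fin.tail (fun _ : Fin (n + 1) => 𝐱) = fun _ => 𝐱 from rfl]
  module

lemma le_of_hasDecomposition_wState_add (n : ℕ) (e : ℂ) {r : ℕ}
    (h : HasDecomposition (wState (Fin n) + e • tprod ℂ fun _ => 𝐱) r) : n ≤ r := by
  induction n generalizing e r with
  | zero => exact r.zero_le
  | succ n ih =>
    have hsnd := contractFirst_wState_add (n := n) (LinearMap.snd ℂ ℂ ℂ) e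
    have hfst := contractFirst_wState_add (n := n) (LinearMap.fst ℂ ℂ ℂ) e
    simp only [LinearMap.snd_apply, LinearMap.fst_apply, one_smul, zero_smul, zero_add,
      add_zero] at hsnd hfst
    obtain ⟨hr, γ, hγ⟩ := exists_hasDecomposition_contractFirst_sub h (LinearMap.fst ℂ ℂ ℂ)
      (LinearMap.snd ℂ ℂ ℂ) (hsnd ▸ tprod_ne_zero_of_fst_ne_zero fun _ => one_ne_zero)
    rw [hsnd, hfst] at hγ
    have := ih (e - γ) (by convert hγ using 2; module)
    omega

end WBound

lemma card_le_of_hasDecomposition_wState {ι : Type*} [Fintype ι] [DecidableEq ι] {r : ℕ}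
    (h : HasDecomposition (wState ι) r) : Fintype.card ι ≤ r := by
  have h' := h.reindex (Fintype.equivFin ι)
  rw [reindex_wState] at h'
  exact le_of_hasDecomposition_wState_add _ 0 (by simpa using h')

section Merge

variable {α β : Type*} [DecidableEq α] [DecidableEq β]

variable (α β) in
def wPair [Fintype α] [Fintype β] : ⨂[ℂ] (_ : α ⊕ β), ℂ × ℂ :=
  ∑ p : α × β, tprod ℂ (Sum.elim (wWord p.1) (wWord p.2))

lemma WtensorW_eq_wPair (d₁ d₂ : ℕ) : WtensorW d₁ d₂ = wPair (Fin d₁) (Fin d₂) := rfl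

lemma reindex_wPair [Fintype α] [Fintype β] {α' β' : Type*} [Fintype α'] [Fintype β']
    [DecidableEq α'] [DecidableEq β'] (e₁ : α ≃ α') (e₂ : β ≃ β') :
    reindex ℂ (fun _ => ℂ × ℂ) (e₁.sumCongr e₂) (wPair α β) = wPair α' β' := by
  simp only [wPair, map_sum, reindex_tprod]
  refine Fintype.sum_equiv (e₁.prodCongr e₂) _ _ fun p => congrArg _ ?_
  funext i
  rcases i with i | i <;> simp [wWord, Equiv.symm_apply_eq]

/-- Multiplication of `ℂ[ε]/(ε²)` in the basis `𝐱 = ε`, `𝐲 = 1`. -/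
def dualMul : ℂ × ℂ →ₗ[ℂ] ℂ × ℂ →ₗ[ℂ] ℂ × ℂ :=
  LinearMap.mk₂ ℂ (fun a b => (a.1 * b.2 + a.2 * b.1, a.2 * b.2))
    (fun _ _ _ => by ext <;> simp <;> ring) (fun _ _ _ => by ext <;> simp <;> ring)
    (fun _ _ _ => by ext <;> simp <;> ring) (fun _ _ _ => by ext <;> simp <;> ring)

def mergeWord (v : Option α ⊕ Option β → ℂ × ℂ) : Option (α ⊕ β) → ℂ × ℂ
  | none => dualMul (v (.inl none)) (v (.inr none))
  | some s => v (Sum.map some some s)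

lemma exists_mergeWord_update (v : Option α ⊕ Option β → ℂ × ℂ) (j : Option α ⊕ Option β) :
    ∃ (t : Option (α ⊕ β)) (L : ℂ × ℂ →ₗ[ℂ] ℂ × ℂ),
      ∀ a, mergeWord (Function.update v j a) = Function.update (mergeWord v) t (L a) := by
  rcases j with (_ | i) | (_ | i)
  · refine ⟨none, dualMul.flip (v (.inr none)), fun a => funext fun t => ?_⟩
    rcases t with _ | i | i <;> simp [mergeWord]
  · refine ⟨some (.inl i), LinearMap.id, fun a => funext fun t => ?_⟩
    rcases t with _ | i' | i' <;> simp [mergeWord, Function.update_apply]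
  · refine ⟨none, dualMul (v (.inl none)), fun a => funext fun t => ?_⟩
    rcases t with _ | i | i <;> simp [mergeWord]
  · refine ⟨some (.inr i), LinearMap.id, fun a => funext fun t => ?_⟩
    rcases t with _ | i' | i' <;> simp [mergeWord, Function.update_apply]

def mergeMap : (⨂[ℂ] (_ : Option α ⊕ Option β), ℂ × ℂ) →ₗ[ℂ] ⨂[ℂ] (_ : Option (α ⊕ β)), ℂ × ℂ :=
  lift <| MultilinearMap.mk' (fun v => tprod ℂ (mergeWord v))
    (fun v j a b => by
      obtain ⟨t, L, hL⟩ := exists_mergeWord_update v j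
      simp only [hL, map_add, MultilinearMap.map_update_add])
    (fun v j c a => by
      obtain ⟨t, L, hL⟩ := exists_mergeWord_update v j
      simp only [hL, map_smul, MultilinearMap.map_update_smul])

lemma mergeMap_tprod (v : Option α ⊕ Option β → ℂ × ℂ) :
    mergeMap (tprod ℂ v) = tprod ℂ (mergeWord v) := by
  simp [mergeMap]

lemma mergeMap_wPair [Fintype α] [Fintype β] :
    mergeMap (wPair (Option α) (Option β)) = wState (Option (α ⊕ β)) := by
  have h_none_none : mergeWord (Sum.elim (wWord none) (wWord none)) =
      wWord (none : Option (α ⊕ β)) := by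
    funext t; rcases t with _ | i | i <;> simp [mergeWord, wWord, dualMul]
  have h_none_some (b : β) : mergeWord (Sum.elim (wWord none) (wWord (some b))) =
      wWord (some (.inr b) : Option (α ⊕ β)) := by
    funext t; rcases t with _ | i | i <;> simp [mergeWord, wWord, dualMul]
  have h_some_none (a : α) : mergeWord (Sum.elim (wWord (some a)) (wWord none)) =
      wWord (some (.inl a) : Option (α ⊕ β)) := by
    funext t; rcases t with _ | i | i <;> simp [mergeWord, wWord, dualMul]
  have h_some_some (a : α) (b : β) :
      tprod ℂ (mergeWord (Sum.elim (wWord (some a)) (wWord (some b)))) = 0 :=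
    MultilinearMap.map_coord_zero _ none (by simp [mergeWord, wWord, dualMul])
  rw [wPair, wState, map_sum]
  simp only [mergeMap_tprod, Fintype.sum_prod_type, Fintype.sum_option, Fintype.sum_sum_type,
    h_none_none, h_none_some, h_some_none, h_some_some, Finset.sum_const_zero, add_zero]
  abel

end Merge

end

theorem stmt15 (d₁ d₂ : ℕ) (h₁ : 1 ≤ d₁) (h₂ : 1 ≤ d₂) :
    d₁ + d₂ - 1 ≤ tRank (WtensorW d₁ d₂) := by
  obtain ⟨k, rfl⟩ : ∃ k, d₁ = k + 1 := ⟨d₁ - 1, by omega⟩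
  obtain ⟨l, rfl⟩ : ∃ l, d₂ = l + 1 := ⟨d₂ - 1, by omega⟩
  rw [WtensorW_eq_wPair]
  set T := wPair (Fin (k + 1)) (Fin (l + 1))
  have hT : HasDecomposition T (tRank T) := hasDecomposition_tRank_sum_tprod _
  have hmerged := (hT.reindex ((finSuccEquiv k).sumCongr (finSuccEquiv l))).map
    mergeMap mergeWord mergeMap_tprod
  rw [reindex_wPair, mergeMap_wPair] at hmerged
  have := card_le_of_hasDecomposition_wState hmerged
  simp only [Fintype.card_option, Fintype.card_sum, Fintype.card_fin] at this
  omega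
end

section
/- For k ≥ 1 and d₁,…,d_k ≥ 1, the tensor rank of W_{d₁} ⊗ ⋯ ⊗ W_{d_k} in (ℂ²)^{⊗(d₁+⋯+d_k)} is at least d₁ + ⋯ + d_k − k + 1. -/
/-!
Identify a tensor in `(ℂ²)^{⊗ι}` with its coefficient function on `{x, y}`-words `f : ι → Bool`.
Partition the slots by a surjection `g : ι → κ` and consider the family of tensors
`⨂ⱼ (W_{g⁻¹ j} + γⱼ x^{⊗ g⁻¹ j})`; `W_{d₁} ⊗ ⋯ ⊗ W_{d_k}` is the member with `γ = 0`.
Suppose such a tensor is a sum of `r` rank-one terms and some fiber has two slots `i₀ ≠ i₁`.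
Some term has a nonzero `y`-coordinate at `i₀` (otherwise the coefficient of a word with exactly
one `y` per fiber, placed at `i₀`, would vanish), and pairing slot `i₀` with `x* + c y*` for the
right `c` kills that term. The result is again in the family, on `ι ∖ {i₀}` with only `γ (g i₀)`
shifted by `c`, and it is a sum of `r - 1` rank-one terms. After `|ι| - |κ|` such steps the
tensor is still nonzero, so `r ≥ |ι| - |κ| + 1`.
-/

open scoped TensorProduct
open PiTensorProduct

/-- `W_{d 0} ⊗ ⋯ ⊗ W_{d (k-1)}` as an element of `(ℂ²)^{⊗(d 0 + ⋯ + d (k-1))}`,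
with the tensor factors indexed by `Σ j, Fin (d j)` and `x = (1,0)`, `y = (0,1)`:
expanding each `W_{d j} = ∑_{q} x ⊗ ⋯ ⊗ y ⊗ ⋯ ⊗ x` (with `y` in position `q`),
the product is the sum over all choices `p j` of the position of `y` in the
`j`-th group. -/
noncomputable def Wprod (k : ℕ) (d : Fin k → ℕ) :
    ⨂[ℂ] (_ : Σ j : Fin k, Fin (d j)), (ℂ × ℂ) :=
  ∑ p : (Π j : Fin k, Fin (d j)), tprod ℂ (fun i =>
    if i.2 = p i.1 then ((0, 1) : ℂ × ℂ) else (1, 0))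


open Finset Function

noncomputable section

namespace WStateRank

lemma funSplitAt_symm_apply_self {α β : Type*} [DecidableEq α] (i₀ : α) (b : β)
    (f : {i // i ≠ i₀} → β) : (Equiv.funSplitAt i₀ β).symm (b, f) i₀ = b := by
  simp

lemma funSplitAt_symm_apply_coe {α β : Type*} [DecidableEq α] (i₀ : α) (b : β)
    (f : {i // i ≠ i₀} → β) (i : {i // i ≠ i₀}) : (Equiv.funSplitAt i₀ β).symm (b, f) i = f i := by
  simp [i.2]

lemma exists_fin_sum_tprod_eq {ι A : Type*} [Fintype A] (v : A → ι → ℂ × ℂ) :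
    ∃ r, ∃ u : Fin r → ι → ℂ × ℂ, ∑ a, tprod ℂ (v a) = ∑ a, tprod ℂ (u a) :=
  ⟨_, v ∘ (Fintype.equivFin A).symm, ((Fintype.equivFin A).symm.sum_comp _).symm⟩

variable {ι κ : Type*} [Fintype ι]

/-- `w a i b` is the `x`- (`b = false`) or `y`-coordinate (`b = true`) of the `i`-th factor of
the `a`-th rank-one term. -/
def HasRankLE (T : (ι → Bool) → ℂ) (r : ℕ) : Prop :=
  ∃ (s : Fin r → ℂ) (w : Fin r → ι → Bool → ℂ), ∀ f, T f = ∑ a, s a * ∏ i, w a i (f i)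

lemma HasRankLE.pos {T : (ι → Bool) → ℂ} {r : ℕ} (h : HasRankLE T r) {f₀ : ι → Bool}
    (hT : T f₀ ≠ 0) : 0 < r := by
  obtain ⟨s, w, hw⟩ := h
  rw [Nat.pos_iff_ne_zero]
  rintro rfl
  simp [hw] at hT

def coord (b : Bool) : ℂ × ℂ →ₗ[ℂ] ℂ :=
  if b then LinearMap.snd ℂ ℂ ℂ else LinearMap.fst ℂ ℂ ℂ

def coeff (f : ι → Bool) : (⨂[ℂ] (_ : ι), ℂ × ℂ) →ₗ[ℂ] ℂ :=
  lift ((MultilinearMap.mkPiAlgebra ℂ ι ℂ).compLinearMap fun i => coord (f i))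

lemma coeff_tprod (f : ι → Bool) (v : ι → ℂ × ℂ) :
    coeff f (tprod ℂ v) = ∏ i, coord (f i) (v i) := by
  simp [coeff]

lemma hasRankLE_coeff {r : ℕ} {T : ⨂[ℂ] (_ : ι), ℂ × ℂ} {v : Fin r → ι → ℂ × ℂ}
    (hT : T = ∑ a, tprod ℂ (v a)) : HasRankLE (fun f => coeff f T) r :=
  ⟨1, fun a i b => coord b (v a i), fun f => by simp [hT, coeff_tprod]⟩

section

variable [DecidableEq ι]

/-- Pairing the factor `i₀` with the functional `x* + c • y*`. -/
def contract (i₀ : ι) (c : ℂ) (T : (ι → Bool) → ℂ) : ({i // i ≠ i₀} → Bool) → ℂ :=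
  fun f => T ((Equiv.funSplitAt i₀ Bool).symm (false, f)) +
    c * T ((Equiv.funSplitAt i₀ Bool).symm (true, f))

lemma contract_sum_prod {A : Type*} [Fintype A] (i₀ : ι) (c : ℂ) (s : A → ℂ)
    (w : A → ι → Bool → ℂ) (f : {i // i ≠ i₀} → Bool) :
    contract i₀ c (fun f => ∑ a, s a * ∏ i, w a i (f i)) f =
      ∑ a, s a * (w a i₀ false + c * w a i₀ true) * ∏ i : {i // i ≠ i₀}, w a i (f i) := by
  simp only [contract, Fintype.prod_eq_mul_prod_subtype_ne _ i₀, funSplitAt_symm_apply_self,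
    funSplitAt_symm_apply_coe, mul_sum, ← sum_add_distrib]
  exact sum_congr rfl fun a _ => by ring

lemma HasRankLE.exists_contract {T : (ι → Bool) → ℂ} {r : ℕ} (h : HasRankLE T (r + 1))
    {i₀ : ι} {f₀ : ι → Bool} (hf₀ : f₀ i₀ = true) (hT : T f₀ ≠ 0) :
    ∃ c, HasRankLE (contract i₀ c T) r := by
  obtain ⟨s, w, hw⟩ := h
  obtain ⟨a₀, ha₀⟩ : ∃ a, w a i₀ true ≠ 0 := by
    by_contra! hzero
    refine hT (hw f₀ ▸ sum_eq_zero fun a _ => ?_)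
    rw [prod_eq_zero (mem_univ i₀) (by rw [hf₀, hzero a]), mul_zero]
  set c := -w a₀ i₀ false / w a₀ i₀ true
  have hkill : w a₀ i₀ false + c * w a₀ i₀ true = 0 := by
    rw [div_mul_cancel₀ _ ha₀, add_neg_cancel]
  refine ⟨c, fun a => s (a₀.succAbove a) * (w (a₀.succAbove a) i₀ false +
    c * w (a₀.succAbove a) i₀ true), fun a i => w (a₀.succAbove a) i, fun f => ?_⟩
  rw [show T = _ from funext hw, contract_sum_prod, Fin.sum_univ_succAbove _ a₀, hkill,
    mul_zero, zero_mul, zero_add]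

/-- The coefficient of `W + γ • x ⊗ ⋯ ⊗ x` at a basis tensor with `m` factors `y`. -/
def wCoeff (γ : ℂ) (m : ℕ) : ℂ :=
  if m = 1 then 1 else if m = 0 then γ else 0

lemma wCoeff_add_mul_wCoeff_succ (γ c : ℂ) (m : ℕ) :
    wCoeff γ m + c * wCoeff γ (m + 1) = wCoeff (γ + c) m := by
  rcases m with _ | _ | m <;> simp [wCoeff]

variable [DecidableEq κ]

def fiberCount (g : ι → κ) (f : ι → Bool) (j : κ) : ℕ :=
  #{i | g i = j ∧ f i}

/-- The coefficients of `⨂ⱼ (W_{g⁻¹ j} + γ j • x^{⊗ g⁻¹ j})` in the basis `e_f`, where `f i`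
records whether the `i`-th factor is `y`. -/
def wTensor [Fintype κ] (g : ι → κ) (γ : κ → ℂ) (f : ι → Bool) : ℂ :=
  ∏ j, wCoeff (γ j) (fiberCount g f j)

lemma fiberCount_funSplitAt_symm (g : ι → κ) (i₀ : ι) (b : Bool) (f : {i // i ≠ i₀} → Bool)
    (j : κ) :
    fiberCount g ((Equiv.funSplitAt i₀ Bool).symm (b, f)) j =
      fiberCount (g ∘ Subtype.val) f j + if g i₀ = j ∧ b then 1 else 0 := by
  simp only [fiberCount, card_filter]
  rw [Fintype.sum_eq_add_sum_subtype_ne _ i₀, funSplitAt_symm_apply_self, add_comm]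
  simp only [funSplitAt_symm_apply_coe, comp_apply]

lemma contract_wTensor [Fintype κ] (g : ι → κ) (γ : κ → ℂ) (i₀ : ι) (c : ℂ) :
    contract i₀ c (wTensor g γ) =
      wTensor (g ∘ Subtype.val) (update γ (g i₀) (γ (g i₀) + c)) := by
  funext f
  simp only [contract, wTensor, fiberCount_funSplitAt_symm,
    Fintype.prod_eq_mul_prod_subtype_ne _ (g i₀)]
  have hrest (p : Prop) [Decidable p] : ∏ j : {j // j ≠ g i₀},
      wCoeff (γ j) (fiberCount (g ∘ Subtype.val) f j + if g i₀ = j ∧ p then 1 else 0) =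
      ∏ j : {j // j ≠ g i₀},
        wCoeff (update γ (g i₀) (γ (g i₀) + c) j) (fiberCount (g ∘ Subtype.val) f j) :=
    prod_congr rfl fun j _ => by simp [j.2, Ne.symm j.2]
  rw [hrest, hrest, update_self, ← wCoeff_add_mul_wCoeff_succ]
  simp only [true_and, Bool.false_eq_true, and_false, if_true, if_false, add_zero]
  ring

lemma wTensor_decide_eq_one [Fintype κ] {g : ι → κ} {σ : κ → ι} (hσ : RightInverse σ g)
    (γ : κ → ℂ) : wTensor g γ (fun i => decide (i = σ (g i))) = 1 := by
  have hcount (j : κ) : fiberCount g (fun i => decide (i = σ (g i))) j = 1 := by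
    rw [fiberCount, card_eq_one]
    refine ⟨σ j, ext fun i => ?_⟩
    simp only [mem_filter, mem_univ, true_and, decide_eq_true_eq, mem_singleton]
    constructor
    · rintro ⟨rfl, hi⟩
      exact hi
    · rintro rfl
      exact ⟨hσ j, by rw [hσ j]⟩
  exact prod_eq_one fun j _ => by simp [hcount j, wCoeff]

theorem card_sub_card_add_one_le_of_hasRankLE_wTensor [Fintype κ] {g : ι → κ} (hg : Surjective g)
    {γ : κ → ℂ} {r : ℕ} (h : HasRankLE (wTensor g γ) r) :
    Fintype.card ι - Fintype.card κ + 1 ≤ r := by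
  induction hn : Fintype.card ι using Nat.strong_induction_on generalizing ι γ r with
  | _ n ih =>
  have hr : 0 < r := h.pos (wTensor_decide_eq_one (rightInverse_surjInv hg) γ ▸ one_ne_zero)
  by_cases hinj : Injective g
  · have := Fintype.card_le_of_injective g hinj
    omega
  obtain ⟨i₀, i₁, hgi, hne⟩ : ∃ i₀ i₁, g i₀ = g i₁ ∧ i₀ ≠ i₁ := by
    simpa [Injective] using hinj
  obtain ⟨r, rfl⟩ := Nat.exists_eq_add_one_of_ne_zero hr.ne'
  -- a section of `g` through `i₀` yields a nonzero coefficient with `y` in slot `i₀`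
  have hσ : RightInverse (update (surjInv hg) (g i₀) i₀) g := fun j => by
    rcases eq_or_ne j (g i₀) with rfl | hj
    · rw [update_self]
    · rw [update_of_ne hj, rightInverse_surjInv hg j]
  obtain ⟨c, hc⟩ := h.exists_contract (i₀ := i₀) (by simp) (wTensor_decide_eq_one hσ γ ▸ one_ne_zero)
  rw [contract_wTensor] at hc
  have hg' : Surjective (g ∘ Subtype.val : {i // i ≠ i₀} → κ) := fun j => by
    obtain ⟨i, rfl⟩ := hg j
    by_cases hi : i = i₀
    · exact ⟨⟨i₁, hne.symm⟩, by simp [hi, hgi]⟩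
    · exact ⟨⟨i, hi⟩, rfl⟩
  have hcard : Fintype.card {i // i ≠ i₀} + 1 = n := by
    rw [← hn, Fintype.card_subtype_compl, Fintype.card_subtype_eq]
    have := Fintype.card_pos_iff.mpr ⟨i₀⟩
    omega
  have := ih _ (by omega) hg' hc rfl
  omega

end

lemma sum_prod_ite_decide_eq_wCoeff_zero {τ : Type*} [Fintype τ] [DecidableEq τ] (h : τ → Bool) :
    ∑ q, ∏ t, (if h t = decide (t = q) then (1 : ℂ) else 0) = wCoeff 0 #{t | h t} := by
  simp only [Fintype.prod_boole]
  by_cases hS : ∃ q₀, ∀ t, h t = decide (t = q₀)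
  · obtain ⟨q₀, hq₀⟩ := hS
    obtain rfl : h = fun t => decide (t = q₀) := funext hq₀
    simp [wCoeff, filter_eq']
  · have hcard : #{t | h t} ≠ 1 := fun h1 => by
      obtain ⟨q₀, hq₀⟩ := card_eq_one.mp h1
      exact hS ⟨q₀, fun t => Bool.eq_iff_iff.mpr (by simpa using congrArg (t ∈ ·) hq₀)⟩
    simp only [not_exists] at hS
    simp [hS, hcard, wCoeff]

lemma fiberCount_sigma_fst {k : ℕ} {d : Fin k → ℕ} (f : (Σ j, Fin (d j)) → Bool) (j : Fin k) :
    fiberCount Sigma.fst f j = #{t | f ⟨j, t⟩} := by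
  rw [fiberCount, ← card_map (Embedding.sigmaMk (β := fun j => Fin (d j)) j)]
  congr 1
  ext ⟨j', t⟩
  simp only [mem_filter, mem_univ, true_and, mem_map, Embedding.sigmaMk_apply]
  constructor
  · rintro ⟨rfl, ht⟩
    exact ⟨t, ht, rfl⟩
  · rintro ⟨t, ht, h⟩
    cases h
    exact ⟨rfl, ht⟩

lemma coeff_Wprod (k : ℕ) (d : Fin k → ℕ) (f : (Σ j, Fin (d j)) → Bool) :
    coeff f (Wprod k d) = wTensor Sigma.fst 0 f := by
  have hcoord (b : Bool) (p : Prop) [Decidable p] :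
      coord b (if p then ((0, 1) : ℂ × ℂ) else (1, 0)) = if b = decide p then 1 else 0 := by
    cases b <;> by_cases p <;> simp [coord, *]
  simp only [Wprod, map_sum, coeff_tprod, Fintype.prod_sigma, hcoord, wTensor, Pi.zero_apply,
    fiberCount_sigma_fst, ← sum_prod_ite_decide_eq_wCoeff_zero]
  exact (Fintype.prod_sum fun j q => ∏ t, if f ⟨j, t⟩ = decide (t = q) then (1 : ℂ) else 0).symm

end WStateRank

end

open WStateRank in
theorem stmt16_general (k : ℕ) (d : Fin k → ℕ) (hd : ∀ j, 1 ≤ d j) :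
    (∑ j, d j) - k + 1 ≤ tRank (Wprod k d) := by
  refine le_csInf (exists_fin_sum_tprod_eq (A := Π j, Fin (d j)) _) fun r ⟨v, hv⟩ => ?_
  have hsurj : Surjective (Sigma.fst : (Σ j, Fin (d j)) → Fin k) := fun j => ⟨⟨j, 0, hd j⟩, rfl⟩
  have hrank : HasRankLE (wTensor (Sigma.fst : (Σ j, Fin (d j)) → Fin k) 0) r := by
    simpa only [coeff_Wprod] using hasRankLE_coeff hv
  simpa using card_sub_card_add_one_le_of_hasRankLE_wTensor hsurj hrank

theorem stmt16 (k : ℕ) (hk : 1 ≤ k) (d : Fin k → ℕ) (hd : ∀ j, 1 ≤ d j) :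
    (∑ j, d j) - k + 1 ≤ tRank (Wprod k d) :=
  stmt16_general k d hd
end
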